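/- For any bounded operator X on a complex Hilbert space, w²(X) ≤ (1/2)·‖X*X + XX*‖. -/

import Mathlib

/-!
For a unit vector `z`, Cauchy–Schwarz bounds `|⟪X z, z⟫| = |⟪z, X* z⟫|` both by `‖X z‖` and by
`‖X* z‖`, so `|⟪X z, z⟫|² ≤ ‖X z‖ ‖X* z‖ ≤ (‖X z‖² + ‖X* z‖²) / 2` by AM–GM. The last sum is
`re ⟪(X* X + X X*) z, z⟫ ≤ ‖X* X + X X*‖`.
-/

open scoped InnerProductSpace

/-- Numerical radius of a bounded operator on a complex Hilbert space. -/
noncomputable def numRad {H : Type*} [NormedAddCommGroup H] [InnerProductSpace ℂ H]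
    (T : H →L[ℂ] H) : ℝ :=
  ⨆ z : {z : H // ‖z‖ = 1}, ‖(⟪T z.1, z.1⟫_ℂ : ℂ)‖

/-- Crawford number. -/
noncomputable def crawford {H : Type*} [NormedAddCommGroup H] [InnerProductSpace ℂ H]
    (T : H →L[ℂ] H) : ℝ :=
  ⨅ z : {z : H // ‖z‖ = 1}, ‖(⟪T z.1, z.1⟫_ℂ : ℂ)‖

/-- The 2×2 block operator matrix `[[A, B], [C, D]]` acting on `H ⊕ H`
(the ℓ² direct sum `WithLp 2 (H × H)`), sending `(x, y)` to `(Ax + By, Cx + Dy)`. -/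
noncomputable def blk {H : Type*} [NormedAddCommGroup H] [InnerProductSpace ℂ H]
    (A B C D : H →L[ℂ] H) : WithLp 2 (H × H) →L[ℂ] WithLp 2 (H × H) :=
  (((WithLp.prodContinuousLinearEquiv 2 ℂ H H).symm.toContinuousLinearMap).comp
    (((A.comp (ContinuousLinearMap.fst ℂ H H) + B.comp (ContinuousLinearMap.snd ℂ H H)).prod
      (C.comp (ContinuousLinearMap.fst ℂ H H) + D.comp (ContinuousLinearMap.snd ℂ H H))))).comp
    ((WithLp.prodContinuousLinearEquiv 2 ℂ H H).toContinuousLinearMap)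

open ContinuousLinearMap RCLike

section Adjoint

variable {𝕜 E : Type*} [RCLike 𝕜] [NormedAddCommGroup E] [InnerProductSpace 𝕜 E] [CompleteSpace E]

theorem ContinuousLinearMap.norm_inner_apply_self_sq_le (T : E →L[𝕜] E) (z : E) :
    ‖⟪T z, z⟫_𝕜‖ ^ 2 ≤ (‖T z‖ ^ 2 + ‖star T z‖ ^ 2) / 2 * ‖z‖ ^ 2 := by
  have h_left : ‖⟪T z, z⟫_𝕜‖ ≤ ‖T z‖ * ‖z‖ := norm_inner_le_norm _ _
  have h_right : ‖⟪T z, z⟫_𝕜‖ ≤ ‖z‖ * ‖star T z‖ := by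
    rw [star_eq_adjoint, ← adjoint_inner_right]
    exact norm_inner_le_norm _ _
  calc ‖⟪T z, z⟫_𝕜‖ ^ 2 ≤ (‖T z‖ * ‖z‖) * (‖z‖ * ‖star T z‖) := by
        rw [sq]; exact mul_le_mul h_left h_right (norm_nonneg _) (by positivity)
    _ ≤ (‖T z‖ ^ 2 + ‖star T z‖ ^ 2) / 2 * ‖z‖ ^ 2 := by
        nlinarith [sq_nonneg (‖T z‖ - ‖star T z‖), sq_nonneg ‖z‖]

theorem ContinuousLinearMap.re_inner_star_mul_self_add_self_mul_star (T : E →L[𝕜] E) (z : E) :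
    re ⟪(star T * T + T * star T) z, z⟫_𝕜 = ‖T z‖ ^ 2 + ‖star T z‖ ^ 2 := by
  rw [apply_norm_sq_eq_inner_adjoint_left T, apply_norm_sq_eq_inner_adjoint_left (star T),
    star_eq_adjoint, adjoint_adjoint, add_apply, inner_add_left, map_add]
  rfl

theorem ContinuousLinearMap.norm_apply_sq_add_norm_star_apply_sq_le (T : E →L[𝕜] E) (z : E) :
    ‖T z‖ ^ 2 + ‖star T z‖ ^ 2 ≤ ‖star T * T + T * star T‖ * ‖z‖ ^ 2 := by
  set S := star T * T + T * star T
  calc ‖T z‖ ^ 2 + ‖star T z‖ ^ 2 = re ⟪S z, z⟫_𝕜 :=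
        (re_inner_star_mul_self_add_self_mul_star T z).symm
    _ ≤ ‖S z‖ * ‖z‖ := re_inner_le_norm _ _
    _ ≤ ‖S‖ * ‖z‖ * ‖z‖ := by gcongr; exact le_opNorm S z
    _ = ‖S‖ * ‖z‖ ^ 2 := by ring

end Adjoint

section NumericalRadius

variable {H : Type*} [NormedAddCommGroup H] [InnerProductSpace ℂ H]

theorem numRad_nonneg (T : H →L[ℂ] H) : 0 ≤ numRad T :=
  Real.iSup_nonneg fun _ ↦ norm_nonneg _

theorem numRad_sq_le_of_forall {T : H →L[ℂ] H} {c : ℝ} (hc : 0 ≤ c)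
    (h : ∀ z : H, ‖z‖ = 1 → ‖⟪T z, z⟫_ℂ‖ ^ 2 ≤ c) : numRad T ^ 2 ≤ c := by
  have h_sqrt : numRad T ≤ √c :=
    Real.iSup_le (fun z ↦ (Real.le_sqrt (norm_nonneg _) hc).2 (h z.1 z.2)) (Real.sqrt_nonneg c)
  exact (Real.le_sqrt (numRad_nonneg T) hc).1 h_sqrt

end NumericalRadius

theorem numRad_sq_le_half {H : Type*} [NormedAddCommGroup H] [InnerProductSpace ℂ H]
    [CompleteSpace H] (X : H →L[ℂ] H) :
    numRad X ^ 2 ≤ (1 / 2) * ‖star X * X + X * star X‖ := by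
  refine numRad_sq_le_of_forall (by positivity) fun z hz ↦ ?_
  have h_sum := X.norm_apply_sq_add_norm_star_apply_sq_le z
  have h_amgm := X.norm_inner_apply_self_sq_le z
  rw [hz, one_pow, mul_one] at h_sum h_amgm
  linarith
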